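/- arXiv:1002.2060 — 6 statements merged into one kernel-verified Lean document; each statement's English description precedes it below -/
import Mathlib

section
/- Let k1 ≥ l1 ≥ 0 and k2 ≥ l2 ≥ 0 be integers with n = k1+l1+k2+l2 ≥ 1, and set α = (k1−l1)/2 and β = (k2−l2)/2. Then the complex two-dimensional problem reduces to a weighted problem on the triangle: L(k1,l1,k2,l2) = D_{l1,l2}(α,β). -/
/-- The supremum over the unit ball in `ℂ²` of the modulus of the difference between the
monomial `z₁^k₁ conj z₁^l₁ z₂^k₂ conj z₂^l₂` and `P(z₁, conj z₁, z₂, conj z₂)`. -/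
noncomputable def ballSupDev (k1 l1 k2 l2 : ℕ) (P : MvPolynomial (Fin 4) ℂ) : ℝ :=
  sSup ((fun z : ℂ × ℂ =>
      ‖z.1 ^ k1 * (starRingEnd ℂ z.1) ^ l1 * z.2 ^ k2 * (starRingEnd ℂ z.2) ^ l2
        - MvPolynomial.eval ![z.1, starRingEnd ℂ z.1, z.2, starRingEnd ℂ z.2] P‖) ''
    {z : ℂ × ℂ | ‖z.1‖ ^ 2 + ‖z.2‖ ^ 2 ≤ 1})

/-- The minimal deviation `L(k₁,l₁,k₂,l₂)`: infimum over polynomials `P` in four commuting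
complex variables of total degree at most `n - 1` (where `n = k₁+l₁+k₂+l₂`) of the sup norm on
the ball of `z₁^k₁ conj z₁^l₁ z₂^k₂ conj z₂^l₂ - P(z₁, conj z₁, z₂, conj z₂)`. -/
noncomputable def devL (k1 l1 k2 l2 : ℕ) : ℝ :=
  sInf {r : ℝ | ∃ P : MvPolynomial (Fin 4) ℂ,
    P.totalDegree ≤ k1 + l1 + k2 + l2 - 1 ∧ r = ballSupDev k1 l1 k2 l2 P}
/-- The standard triangle `Δ = {(t₁,t₂) : t₁ ≥ 0, t₂ ≥ 0, t₁ + t₂ ≤ 1}`. -/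
def triangle : Set (ℝ × ℝ) := {t : ℝ × ℝ | 0 ≤ t.1 ∧ 0 ≤ t.2 ∧ t.1 + t.2 ≤ 1}

/-- The weighted sup norm on the triangle: `sup_{(t₁,t₂) ∈ Δ} t₁^α t₂^β |Q(t₁,t₂)|`
(real `rpow`, so `0^0 = 1`). -/
noncomputable def triangleSup (a b : ℝ) (Q : MvPolynomial (Fin 2) ℝ) : ℝ :=
  sSup ((fun t : ℝ × ℝ => t.1 ^ a * t.2 ^ b * |MvPolynomial.eval ![t.1, t.2] Q|) '' triangle)

/-- `Q` has coefficient `1` on the monomial `t₁^{l₁} t₂^{l₂}` and all its other monomials have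
total degree at most `l₁ + l₂ - 1`. -/
def IsDevDCandidate (l1 l2 : ℕ) (Q : MvPolynomial (Fin 2) ℝ) : Prop :=
  Q.coeff (Finsupp.single (0 : Fin 2) l1 + Finsupp.single (1 : Fin 2) l2) = 1 ∧
  ∀ d ∈ Q.support, d ≠ Finsupp.single (0 : Fin 2) l1 + Finsupp.single (1 : Fin 2) l2 →
    (d.sum fun _ e => e) ≤ l1 + l2 - 1

/-- `D_{l₁,l₂}(α,β)`: infimum over such `Q` of the weighted sup norm on the triangle. -/
noncomputable def devD (l1 l2 : ℕ) (a b : ℝ) : ℝ :=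
  sInf {r : ℝ | ∃ Q : MvPolynomial (Fin 2) ℝ, IsDevDCandidate l1 l2 Q ∧ r = triangleSup a b Q}

/-!
Put `p = k₁ - l₁`, `q = k₂ - l₂`. The map `z ↦ (|z₁|², |z₂|²)` sends the ball onto the triangle,
and a real polynomial `Q` lifts to `z₁^p z₂^q Q(|z₁|², |z₂|²)`, a polynomial in `z, z̄` whose
modulus is `t₁^α t₂^β |Q(t)|`. For an admissible `Q` this lift is the target monomial minus a
polynomial of degree `< n`, which gives `L ≤ D`.

Conversely, averaging the error `z^k z̄^l - P(z, z̄)` over the rotations `(ζ^a z₁, ζ^b z₂)` by a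
root of unity, weighted by `ζ^{-(ap+bq)}`, does not increase its sup norm and kills every monomial
except those of the form `z₁^p z₂^q |z₁|^{2i} |z₂|^{2j}`. What survives is such a lift of a
complex polynomial; at the real point `(√t₁, √t₂)` its real part is `t₁^α t₂^β Q(t)` with `Q`
admissible, which gives `D ≤ L`.
-/

open Finset MvPolynomial ComplexConjugate

lemma IsPrimitiveRoot.sum_range_zpow_mul {K : Type*} [Field K] {N : ℕ} {ζ : K}
    (hζ : IsPrimitiveRoot ζ N) {m : ℤ} (hm : m.natAbs < N) :
    ∑ a ∈ range N, ζ ^ ((a : ℤ) * m) = if m = 0 then (N : K) else 0 := by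
  split_ifs with h0
  · simp [h0]
  have hne : ζ ^ m ≠ 1 := fun h => by
    have := Int.natAbs_dvd_natAbs.mpr ((hζ.zpow_eq_one_iff_dvd m).mp h)
    simp only [Int.natAbs_natCast] at this
    exact absurd (Nat.le_of_dvd (Int.natAbs_pos.mpr h0) this) (by omega)
  have hpow : (ζ ^ m) ^ N = 1 := by
    rw [← zpow_natCast, ← zpow_mul, mul_comm, zpow_mul, zpow_natCast, hζ.pow_eq_one, one_zpow]
  simp_rw [mul_comm _ m, zpow_mul, zpow_natCast]
  rw [geom_sum_eq hne, hpow, sub_self, zero_div]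

/-- The exponent, in `(z₁, z̄₁, z₂, z̄₂)`, of `z₁^p z₂^q |z₁|^{2 s₀} |z₂|^{2 s₁}`. -/
noncomputable def liftExp (p q : ℕ) (s : Fin 2 →₀ ℕ) : Fin 4 →₀ ℕ :=
  Finsupp.single 0 (s 0 + p) + Finsupp.single 1 (s 0) + Finsupp.single 2 (s 1 + q) +
    Finsupp.single 3 (s 1)

section liftExp

variable (p q : ℕ) (s : Fin 2 →₀ ℕ)

@[simp] lemma liftExp_apply_zero : liftExp p q s 0 = s 0 + p := by simp [liftExp]
@[simp] lemma liftExp_apply_one : liftExp p q s 1 = s 0 := by simp [liftExp]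
@[simp] lemma liftExp_apply_two : liftExp p q s 2 = s 1 + q := by simp [liftExp]
@[simp] lemma liftExp_apply_three : liftExp p q s 3 = s 1 := by simp [liftExp]

lemma liftExp_injective : Function.Injective (liftExp p q) := fun s t h => by
  ext i
  fin_cases i
  · simpa using DFunLike.congr_fun h 1
  · simpa using DFunLike.congr_fun h 3

lemma mem_range_liftExp_iff {d : Fin 4 →₀ ℕ} :
    d ∈ Set.range (liftExp p q) ↔ d 0 = d 1 + p ∧ d 2 = d 3 + q := by
  constructor
  · rintro ⟨s, rfl⟩
    simp
  · rintro ⟨h0, h2⟩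
    refine ⟨Finsupp.single 0 (d 1) + Finsupp.single 1 (d 3), ?_⟩
    ext i
    fin_cases i <;> simp [h0, h2]

lemma sum_liftExp :
    ((liftExp p q s).sum fun _ e => e) = 2 * (s.sum fun _ e => e) + p + q := by
  rw [Finsupp.sum_fintype _ _ (fun _ => rfl), Finsupp.sum_fintype _ _ (fun _ => rfl),
    Fin.sum_univ_four, Fin.sum_univ_two]
  simp only [liftExp_apply_zero, liftExp_apply_one, liftExp_apply_two, liftExp_apply_three]
  ring

end liftExp

def conjCoords (z : ℂ × ℂ) : Fin 4 → ℂ := ![z.1, conj z.1, z.2, conj z.2]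

lemma eval_conjCoords_monomial (z : ℂ × ℂ) (d : Fin 4 →₀ ℕ) (c : ℂ) :
    eval (conjCoords z) (monomial d c)
      = c * (z.1 ^ d 0 * conj z.1 ^ d 1 * z.2 ^ d 2 * conj z.2 ^ d 3) := by
  rw [eval_monomial, Finsupp.prod_fintype _ _ (fun _ => pow_zero _), Fin.prod_univ_four]
  rfl

lemma eval_conjCoords_monomial_liftExp (z : ℂ × ℂ) (p q : ℕ) (s : Fin 2 →₀ ℕ) (c : ℂ) :
    eval (conjCoords z) (monomial (liftExp p q s) c)
      = c * z.1 ^ p * z.2 ^ q * ((‖z.1‖ ^ 2) ^ s 0 * (‖z.2‖ ^ 2) ^ s 1 : ℝ) := by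
  rw [eval_conjCoords_monomial]
  push_cast
  simp only [liftExp_apply_zero, liftExp_apply_one, liftExp_apply_two, liftExp_apply_three,
    ← Complex.mul_conj', pow_add, mul_pow]
  ring

lemma eval_conjCoords_monomial_liftExp_single {k1 l1 k2 l2 : ℕ} (h1 : l1 ≤ k1) (h2 : l2 ≤ k2)
    (z : ℂ × ℂ) :
    eval (conjCoords z) (monomial (liftExp (k1 - l1) (k2 - l2)
        (Finsupp.single 0 l1 + Finsupp.single 1 l2)) 1)
      = z.1 ^ k1 * conj z.1 ^ l1 * z.2 ^ k2 * conj z.2 ^ l2 := by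
  simp only [eval_conjCoords_monomial, liftExp_apply_zero, liftExp_apply_one, liftExp_apply_two,
    liftExp_apply_three]
  simp [Nat.add_sub_cancel' h1, Nat.add_sub_cancel' h2]

lemma continuous_conjCoords : Continuous conjCoords := by
  refine continuous_pi fun i => ?_
  fin_cases i <;> simp [conjCoords] <;> fun_prop

lemma mul_pow_mul_conj_mul_pow {u : ℂ} (hu : ‖u‖ = 1) (w : ℂ) (a b : ℕ) :
    (u * w) ^ a * conj (u * w) ^ b = u ^ ((a : ℤ) - b) * (w ^ a * conj w ^ b) := by
  rw [map_mul, ← Complex.inv_eq_conj hu, zpow_sub₀ (norm_ne_zero_iff.1 (hu ▸ one_ne_zero)),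
    zpow_natCast, zpow_natCast, mul_pow, mul_pow, inv_pow, div_eq_mul_inv]
  ring

lemma eval_conjCoords_rotate_monomial {u₁ u₂ : ℂ} (hu₁ : ‖u₁‖ = 1) (hu₂ : ‖u₂‖ = 1)
    (z : ℂ × ℂ) (d : Fin 4 →₀ ℕ) (c : ℂ) :
    eval (conjCoords (u₁ * z.1, u₂ * z.2)) (monomial d c)
      = u₁ ^ ((d 0 : ℤ) - d 1) * u₂ ^ ((d 2 : ℤ) - d 3) *
          eval (conjCoords z) (monomial d c) := by
  simp only [eval_conjCoords_monomial]
  calc c * ((u₁ * z.1) ^ d 0 * conj (u₁ * z.1) ^ d 1 * (u₂ * z.2) ^ d 2 * conj (u₂ * z.2) ^ d 3)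
      = c * (((u₁ * z.1) ^ d 0 * conj (u₁ * z.1) ^ d 1) *
          ((u₂ * z.2) ^ d 2 * conj (u₂ * z.2) ^ d 3)) := by ring
    _ = _ := by rw [mul_pow_mul_conj_mul_pow hu₁, mul_pow_mul_conj_mul_pow hu₂]; ring

lemma sum_rotate_eval_conjCoords_monomial {N : ℕ} {ζ : ℂ} (hζ : IsPrimitiveRoot ζ N)
    (hN : N ≠ 0) (p q : ℕ) (z : ℂ × ℂ) (d : Fin 4 →₀ ℕ) (c : ℂ)
    (hp : d 0 + d 1 + p < N) (hq : d 2 + d 3 + q < N) :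
    ∑ a ∈ range N, ∑ b ∈ range N, ζ ^ (-((a : ℤ) * p + b * q)) *
        eval (conjCoords (ζ ^ a * z.1, ζ ^ b * z.2)) (monomial d c)
      = if d 0 = d 1 + p ∧ d 2 = d 3 + q then N ^ 2 * eval (conjCoords z) (monomial d c)
        else 0 := by
  have hζ0 : ζ ≠ 0 := hζ.ne_zero hN
  have hnorm : ∀ a : ℕ, ‖ζ ^ a‖ = 1 := fun a => by rw [norm_pow, hζ.norm'_eq_one hN, one_pow]
  set m₁ : ℤ := (d 0 : ℤ) - d 1 - p
  set m₂ : ℤ := (d 2 : ℤ) - d 3 - q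
  have hterm : ∀ a b : ℕ, ζ ^ (-((a : ℤ) * p + b * q)) *
      eval (conjCoords (ζ ^ a * z.1, ζ ^ b * z.2)) (monomial d c)
        = ζ ^ ((a : ℤ) * m₁) * ζ ^ ((b : ℤ) * m₂) * eval (conjCoords z) (monomial d c) := by
    intro a b
    rw [eval_conjCoords_rotate_monomial (hnorm a) (hnorm b), ← zpow_natCast, ← zpow_natCast,
      ← zpow_mul, ← zpow_mul, ← mul_assoc, ← mul_assoc, ← zpow_add₀ hζ0, ← zpow_add₀ hζ0,
      ← zpow_add₀ hζ0]
    congr 2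
    ring
  simp_rw [hterm, ← Finset.sum_mul, ← Finset.mul_sum, ← Finset.sum_mul,
    hζ.sum_range_zpow_mul (m := m₁) (by omega), hζ.sum_range_zpow_mul (m := m₂) (by omega)]
  by_cases h₁ : d 0 = d 1 + p <;> by_cases h₂ : d 2 = d 3 + q <;>
    simp [m₁, m₂, h₁, h₂, sq] <;> omega

noncomputable def radialPart (p q : ℕ) (F : MvPolynomial (Fin 4) ℂ) : MvPolynomial (Fin 2) ℂ :=
  ∑ s ∈ F.support.preimage (liftExp p q) (liftExp_injective p q).injOn,
    monomial s (F.coeff (liftExp p q s))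

section radialPart

variable (p q : ℕ) (F : MvPolynomial (Fin 4) ℂ)

lemma coeff_radialPart (s : Fin 2 →₀ ℕ) :
    (radialPart p q F).coeff s = F.coeff (liftExp p q s) := by
  classical
  rw [radialPart, coeff_sum]
  simp only [coeff_monomial, Finset.sum_ite_eq', Finset.mem_preimage, mem_support_iff, ite_not]
  split_ifs with h <;> simp [h]

lemma sum_rotate_eval_conjCoords {N : ℕ} {ζ : ℂ} (hζ : IsPrimitiveRoot ζ N) (hN : N ≠ 0)
    (hp : F.totalDegree + p < N) (hq : F.totalDegree + q < N) (z : ℂ × ℂ) :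
    ∑ a ∈ range N, ∑ b ∈ range N, ζ ^ (-((a : ℤ) * p + b * q)) *
        eval (conjCoords (ζ ^ a * z.1, ζ ^ b * z.2)) F
      = N ^ 2 * z.1 ^ p * z.2 ^ q *
          eval ![((‖z.1‖ ^ 2 : ℝ) : ℂ), ((‖z.2‖ ^ 2 : ℝ) : ℂ)] (radialPart p q F) := by
  classical
  conv_lhs => rw [F.as_sum]
  simp_rw [map_sum, Finset.mul_sum]
  rw [Finset.sum_congr rfl (fun a _ => Finset.sum_comm), Finset.sum_comm]
  have hdeg : ∀ d ∈ F.support, d 0 + d 1 + d 2 + d 3 ≤ F.totalDegree := fun d hd => by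
    simpa [Finsupp.sum_fintype, Fin.sum_univ_four] using le_totalDegree hd
  rw [Finset.sum_congr rfl fun d hd => sum_rotate_eval_conjCoords_monomial hζ hN p q z d _
    (by have := hdeg d hd; omega) (by have := hdeg d hd; omega)]
  rw [← Finset.sum_preimage (liftExp p q) F.support (liftExp_injective p q).injOn _
    fun d _ hd => if_neg fun h => hd ((mem_range_liftExp_iff p q).2 h)]
  simp only [liftExp_apply_zero, liftExp_apply_one, liftExp_apply_two, liftExp_apply_three,
    true_and, if_true, eval_conjCoords_monomial_liftExp]
  simp only [radialPart, map_sum, eval_monomial, Finsupp.prod_fintype _ _ (fun _ => pow_zero _),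
    Fin.prod_univ_two, Finset.mul_sum]
  refine Finset.sum_congr rfl fun s _ => ?_
  simp only [Matrix.cons_val_zero, Matrix.cons_val_one]
  push_cast
  ring

end radialPart

noncomputable def reCoeffs {σ : Type*} (Q : MvPolynomial σ ℂ) : MvPolynomial σ ℝ :=
  ∑ s ∈ Q.support, monomial s (Q.coeff s).re

section reCoeffs

variable {σ : Type*} (Q : MvPolynomial σ ℂ)

lemma coeff_reCoeffs (s : σ →₀ ℕ) : (reCoeffs Q).coeff s = (Q.coeff s).re := by
  classical
  rw [reCoeffs, coeff_sum]
  simp only [coeff_monomial, Finset.sum_ite_eq', mem_support_iff, ite_not]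
  split_ifs with h <;> simp [h]

lemma eval_reCoeffs (t : σ → ℝ) : eval t (reCoeffs Q) = (eval (fun i => (t i : ℂ)) Q).re := by
  rw [reCoeffs, map_sum, eval_eq, Complex.re_sum]
  refine Finset.sum_congr rfl fun s _ => ?_
  simp_rw [eval_monomial, Finsupp.prod, ← Complex.ofReal_pow, ← Complex.ofReal_prod,
    Complex.re_mul_ofReal]

end reCoeffs

def unitBallC2 : Set (ℂ × ℂ) := {z | ‖z.1‖ ^ 2 + ‖z.2‖ ^ 2 ≤ 1}

lemma isCompact_unitBallC2 : IsCompact unitBallC2 := by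
  refine Metric.isCompact_of_isClosed_isBounded (isClosed_le (by fun_prop) (by fun_prop)) ?_
  refine (Metric.isBounded_closedBall (x := (0 : ℂ × ℂ)) (r := 1)).subset fun z hz => ?_
  have : ‖z.1‖ ≤ 1 ∧ ‖z.2‖ ≤ 1 := by
    change ‖z.1‖ ^ 2 + ‖z.2‖ ^ 2 ≤ 1 at hz
    constructor <;> nlinarith [norm_nonneg z.1, norm_nonneg z.2]
  simpa [Prod.norm_def] using this

lemma mul_mem_unitBallC2 {u₁ u₂ : ℂ} (hu₁ : ‖u₁‖ = 1) (hu₂ : ‖u₂‖ = 1) {z : ℂ × ℂ}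
    (hz : z ∈ unitBallC2) : (u₁ * z.1, u₂ * z.2) ∈ unitBallC2 := by
  simpa [unitBallC2, hu₁, hu₂] using hz

noncomputable def normSqPair (z : ℂ × ℂ) : ℝ × ℝ := (‖z.1‖ ^ 2, ‖z.2‖ ^ 2)

lemma image_normSqPair_unitBallC2 : normSqPair '' unitBallC2 = triangle := by
  ext t
  constructor
  · rintro ⟨z, hz, rfl⟩
    exact ⟨sq_nonneg _, sq_nonneg _, hz⟩
  · rintro ⟨ht₁, ht₂, ht⟩
    refine ⟨((√t.1 : ℝ), (√t.2 : ℝ)), ?_, ?_⟩ <;>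
      simp [unitBallC2, normSqPair, Real.sq_sqrt, ht₁, ht₂, ht]

lemma rpow_sub_div_two_eq_sqrt_pow {t : ℝ} (ht : 0 ≤ t) {k l : ℕ} (h : l ≤ k) :
    t ^ (((k : ℝ) - l) / 2) = √t ^ (k - l) := by
  rw [Real.sqrt_eq_rpow, ← Real.rpow_natCast, ← Real.rpow_mul ht, Nat.cast_sub h]
  ring_nf

lemma norm_pow_mul_pow_mul_ofReal {k1 l1 k2 l2 : ℕ} (h1 : l1 ≤ k1) (h2 : l2 ≤ k2) (z : ℂ × ℂ)
    (x : ℝ) :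
    ‖z.1 ^ (k1 - l1) * z.2 ^ (k2 - l2) * (x : ℂ)‖
      = (‖z.1‖ ^ 2) ^ (((k1 : ℝ) - l1) / 2) * (‖z.2‖ ^ 2) ^ (((k2 : ℝ) - l2) / 2) * |x| := by
  rw [rpow_sub_div_two_eq_sqrt_pow (sq_nonneg _) h1, rpow_sub_div_two_eq_sqrt_pow (sq_nonneg _) h2,
    Real.sqrt_sq (norm_nonneg _), Real.sqrt_sq (norm_nonneg _), norm_mul, norm_mul, norm_pow,
    norm_pow, Complex.norm_real, Real.norm_eq_abs]

section ballSupDev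

variable (k1 l1 k2 l2 : ℕ) (P : MvPolynomial (Fin 4) ℂ)

lemma le_ballSupDev {z : ℂ × ℂ} (hz : z ∈ unitBallC2) :
    ‖z.1 ^ k1 * conj z.1 ^ l1 * z.2 ^ k2 * conj z.2 ^ l2 - eval (conjCoords z) P‖
      ≤ ballSupDev k1 l1 k2 l2 P := by
  refine le_csSup (isCompact_unitBallC2.bddAbove_image (Continuous.continuousOn ?_))
    (Set.mem_image_of_mem _ hz)
  exact ((by fun_prop : Continuous fun z : ℂ × ℂ => z.1 ^ k1 * conj z.1 ^ l1 * z.2 ^ k2 *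
    conj z.2 ^ l2).sub ((continuous_eval P).comp continuous_conjCoords)).norm

lemma ballSupDev_nonneg : 0 ≤ ballSupDev k1 l1 k2 l2 P :=
  Real.sSup_nonneg <| by rintro _ ⟨z, -, rfl⟩; exact norm_nonneg _

lemma ballSupDev_eq_triangleSup {a b : ℝ} {Q : MvPolynomial (Fin 2) ℝ}
    (h : ∀ z : ℂ × ℂ,
      ‖z.1 ^ k1 * conj z.1 ^ l1 * z.2 ^ k2 * conj z.2 ^ l2 - eval (conjCoords z) P‖
        = (‖z.1‖ ^ 2) ^ a * (‖z.2‖ ^ 2) ^ b * |eval ![‖z.1‖ ^ 2, ‖z.2‖ ^ 2] Q|) :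
    ballSupDev k1 l1 k2 l2 P = triangleSup a b Q := by
  rw [triangleSup, ← image_normSqPair_unitBallC2, ← Set.image_comp]
  exact congrArg sSup (Set.image_congr fun z _ => h z)

end ballSupDev

lemma triangleSup_nonneg (a b : ℝ) (Q : MvPolynomial (Fin 2) ℝ) : 0 ≤ triangleSup a b Q :=
  Real.sSup_nonneg <| by
    rintro _ ⟨t, ⟨ht₁, ht₂, -⟩, rfl⟩
    have := Real.rpow_nonneg ht₁ a
    have := Real.rpow_nonneg ht₂ b
    positivity

lemma sqrt_pow_mul_norm_eval_radialPart_le {F : MvPolynomial (Fin 4) ℂ} {r : ℝ} (p q : ℕ)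
    (hF : ∀ z ∈ unitBallC2, ‖eval (conjCoords z) F‖ ≤ r) {t : ℝ × ℝ} (ht : t ∈ triangle) :
    √t.1 ^ p * √t.2 ^ q * ‖eval ![(t.1 : ℂ), (t.2 : ℂ)] (radialPart p q F)‖ ≤ r := by
  obtain ⟨ht₁, ht₂, ht⟩ := ht
  -- large enough that the root-of-unity sums single out exactly the exponents `liftExp p q s`
  set N := F.totalDegree + p + q + 1
  have hN : N ≠ 0 := Nat.add_one_ne_zero _
  have hζ := Complex.isPrimitiveRoot_exp N hN
  have hnorm : ∀ a : ℕ, ‖Complex.exp (2 * Real.pi * Complex.I / N) ^ a‖ = 1 := fun a => by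
    rw [norm_pow, hζ.norm'_eq_one hN, one_pow]
  set z : ℂ × ℂ := ((√t.1 : ℂ), (√t.2 : ℂ))
  have hz₁ : ‖z.1‖ = √t.1 := by simp [z]
  have hz₂ : ‖z.2‖ = √t.2 := by simp [z]
  have hzball : z ∈ unitBallC2 := by
    simpa [unitBallC2, hz₁, hz₂, Real.sq_sqrt, ht₁, ht₂] using ht
  have key := sum_rotate_eval_conjCoords p q F hζ hN (by omega) (by omega) z
  have hsum := norm_sum_le_of_le (range N) fun a _ => norm_sum_le_of_le (range N) fun b _ =>
    (show ‖_ ^ (-((a : ℤ) * p + b * q)) * eval (conjCoords (_ ^ a * z.1, _ ^ b * z.2)) F‖ ≤ r by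
      rw [norm_mul, norm_zpow, hζ.norm'_eq_one hN, one_zpow, one_mul]
      exact hF _ (mul_mem_unitBallC2 (hnorm a) (hnorm b) hzball))
  rw [key, hz₁, hz₂, Real.sq_sqrt ht₁, Real.sq_sqrt ht₂] at hsum
  simp only [Finset.sum_const, card_range, nsmul_eq_mul, norm_mul, norm_pow,
    Complex.norm_natCast, hz₁, hz₂] at hsum
  refine le_of_mul_le_mul_left ?_ (by positivity : (0 : ℝ) < N ^ 2)
  linarith

noncomputable def radialLift (p q : ℕ) (R : MvPolynomial (Fin 2) ℝ) : MvPolynomial (Fin 4) ℂ :=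
  ∑ s ∈ R.support, monomial (liftExp p q s) ((R.coeff s : ℝ) : ℂ)

section radialLift

variable (p q : ℕ) (R : MvPolynomial (Fin 2) ℝ)

lemma eval_radialLift (z : ℂ × ℂ) :
    eval (conjCoords z) (radialLift p q R)
      = z.1 ^ p * z.2 ^ q * (eval ![‖z.1‖ ^ 2, ‖z.2‖ ^ 2] R : ℝ) := by
  simp only [radialLift, map_sum, eval_conjCoords_monomial_liftExp]
  rw [eval_eq', Complex.ofReal_sum, Finset.mul_sum]
  refine Finset.sum_congr rfl fun s _ => ?_
  simp only [Fin.prod_univ_two, Matrix.cons_val_zero, Matrix.cons_val_one]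
  push_cast
  ring

lemma totalDegree_radialLift_le {m : ℕ}
    (h : ∀ s ∈ R.support, 2 * (s.sum fun _ e => e) + p + q ≤ m) :
    (radialLift p q R).totalDegree ≤ m :=
  (totalDegree_finsetSum _ _).trans <| Finset.sup_le fun s hs =>
    (totalDegree_monomial_le _ _).trans ((sum_liftExp p q s).trans_le (h s hs))

end radialLift

lemma isDevDCandidate_monomial (l1 l2 : ℕ) :
    IsDevDCandidate l1 l2 (monomial (Finsupp.single 0 l1 + Finsupp.single 1 l2) 1) :=
  ⟨by simp [coeff_monomial], fun d hd hne =>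
    absurd (by simpa using hd : _ = d).symm hne⟩

lemma IsDevDCandidate.sum_lt {l1 l2 : ℕ} {Q : MvPolynomial (Fin 2) ℝ}
    (hQ : IsDevDCandidate l1 l2 Q) :
    ∀ s ∈ (Q - monomial (Finsupp.single 0 l1 + Finsupp.single 1 l2) 1).support,
      (s.sum fun _ e => e) < l1 + l2 := by
  intro s hs
  rw [mem_support_iff, coeff_sub, coeff_monomial] at hs
  by_cases he : Finsupp.single 0 l1 + Finsupp.single 1 l2 = s
  · subst he
    exact absurd (by rw [if_pos rfl, hQ.1, sub_self]) hs
  rw [if_neg he, sub_zero] at hs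
  have hle := hQ.2 s (mem_support_iff.2 hs) (Ne.symm he)
  rw [Finsupp.sum_fintype _ _ (fun _ => rfl), Fin.sum_univ_two] at hle ⊢
  refine lt_of_le_of_ne (by omega) fun hsum => he ?_
  ext i
  fin_cases i <;> simp <;> omega

lemma exists_ballSupDev_eq_triangleSup {k1 l1 k2 l2 : ℕ} (h1 : l1 ≤ k1) (h2 : l2 ≤ k2)
    {Q : MvPolynomial (Fin 2) ℝ} (hQ : IsDevDCandidate l1 l2 Q) :
    ∃ P : MvPolynomial (Fin 4) ℂ, P.totalDegree ≤ k1 + l1 + k2 + l2 - 1 ∧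
      ballSupDev k1 l1 k2 l2 P = triangleSup (((k1 : ℝ) - l1) / 2) (((k2 : ℝ) - l2) / 2) Q := by
  set e := Finsupp.single (0 : Fin 2) l1 + Finsupp.single 1 l2
  set R := Q - monomial e 1
  refine ⟨-radialLift (k1 - l1) (k2 - l2) R, ?_,
    ballSupDev_eq_triangleSup _ _ _ _ _ fun z => ?_⟩
  · rw [totalDegree_neg]
    exact totalDegree_radialLift_le _ _ _ fun s hs => by have := hQ.sum_lt s hs; omega
  · rw [← eval_conjCoords_monomial_liftExp_single h1 h2, map_neg, sub_neg_eq_add,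
      eval_conjCoords_monomial_liftExp, eval_radialLift, ← norm_pow_mul_pow_mul_ofReal h1 h2]
    congr 1
    simp [R, e, eval_monomial]
    ring

lemma isDevDCandidate_reCoeffs_radialPart {k1 l1 k2 l2 : ℕ} (h1 : l1 ≤ k1) (h2 : l2 ≤ k2)
    (hn : 1 ≤ k1 + l1 + k2 + l2) {P : MvPolynomial (Fin 4) ℂ}
    (hP : P.totalDegree ≤ k1 + l1 + k2 + l2 - 1) :
    IsDevDCandidate l1 l2 (reCoeffs (radialPart (k1 - l1) (k2 - l2)
      (monomial (liftExp (k1 - l1) (k2 - l2) (Finsupp.single 0 l1 + Finsupp.single 1 l2)) 1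
        - P))) := by
  set e := Finsupp.single (0 : Fin 2) l1 + Finsupp.single 1 l2
  have hcoeff : ∀ s, (reCoeffs (radialPart (k1 - l1) (k2 - l2)
      (monomial (liftExp (k1 - l1) (k2 - l2) e) 1 - P))).coeff s
        = ((if e = s then 1 else 0) - P.coeff (liftExp (k1 - l1) (k2 - l2) s)).re := fun s => by
    simp only [coeff_reCoeffs, coeff_radialPart, coeff_sub, coeff_monomial,
      (liftExp_injective _ _).eq_iff]
  have hdeg : ∀ s, P.coeff (liftExp (k1 - l1) (k2 - l2) s) ≠ 0 →
      2 * (s.sum fun _ x => x) + (k1 - l1) + (k2 - l2) ≤ k1 + l1 + k2 + l2 - 1 := fun s hs =>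
    sum_liftExp (k1 - l1) (k2 - l2) s ▸ (le_totalDegree (mem_support_iff.2 hs)).trans hP
  have he : (e.sum fun _ x => x) = l1 + l2 := by
    simp [e, Finsupp.sum_fintype, Fin.sum_univ_two]
  refine ⟨(hcoeff e).trans ?_, fun s hs hse => ?_⟩
  · have hPe : P.coeff (liftExp (k1 - l1) (k2 - l2) e) = 0 :=
      not_not.1 fun h => by have := hdeg e h; omega
    rw [if_pos rfl, hPe, sub_zero, Complex.one_re]
  · rw [mem_support_iff, hcoeff, if_neg (Ne.symm hse), zero_sub, Complex.neg_re, neg_ne_zero] at hs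
    have := hdeg s fun h => hs (by simp [h])
    omega

lemma exists_triangleSup_le_ballSupDev {k1 l1 k2 l2 : ℕ} (h1 : l1 ≤ k1) (h2 : l2 ≤ k2)
    (hn : 1 ≤ k1 + l1 + k2 + l2) {P : MvPolynomial (Fin 4) ℂ}
    (hP : P.totalDegree ≤ k1 + l1 + k2 + l2 - 1) :
    ∃ Q : MvPolynomial (Fin 2) ℝ, IsDevDCandidate l1 l2 Q ∧
      triangleSup (((k1 : ℝ) - l1) / 2) (((k2 : ℝ) - l2) / 2) Q ≤ ballSupDev k1 l1 k2 l2 P := by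
  set F := monomial (liftExp (k1 - l1) (k2 - l2) (Finsupp.single 0 l1 + Finsupp.single 1 l2)) 1 - P
  refine ⟨reCoeffs (radialPart (k1 - l1) (k2 - l2) F),
    isDevDCandidate_reCoeffs_radialPart h1 h2 hn hP,
    Real.sSup_le ?_ (ballSupDev_nonneg _ _ _ _ _)⟩
  rintro _ ⟨t, ht, rfl⟩
  have hF : ∀ z ∈ unitBallC2, ‖eval (conjCoords z) F‖ ≤ ballSupDev k1 l1 k2 l2 P :=
    fun z hz => by
      rw [map_sub, eval_conjCoords_monomial_liftExp_single h1 h2]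
      exact le_ballSupDev _ _ _ _ _ hz
  have hcoe : (fun i => ((![t.1, t.2] i : ℝ) : ℂ)) = ![(t.1 : ℂ), (t.2 : ℂ)] := by
    ext i; fin_cases i <;> rfl
  refine le_trans ?_ (sqrt_pow_mul_norm_eval_radialPart_le (k1 - l1) (k2 - l2) hF ht)
  dsimp only
  rw [rpow_sub_div_two_eq_sqrt_pow ht.1 h1, rpow_sub_div_two_eq_sqrt_pow ht.2.1 h2,
    eval_reCoeffs, hcoe]
  gcongr
  exact Complex.abs_re_le_norm _

/-- for `k₁ ≥ l₁ ≥ 0`, `k₂ ≥ l₂ ≥ 0` with `n = k₁+l₁+k₂+l₂ ≥ 1`, and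
`α = (k₁-l₁)/2`, `β = (k₂-l₂)/2`, the complex two-dimensional problem reduces to the weighted
problem on the triangle: `L(k₁,l₁,k₂,l₂) = D_{l₁,l₂}(α,β)`. -/
theorem least_deviation_eq_triangle_deviation (k1 l1 k2 l2 : ℕ)
    (h1 : l1 ≤ k1) (h2 : l2 ≤ k2) (hn : 1 ≤ k1 + l1 + k2 + l2) :
    devL k1 l1 k2 l2 = devD l1 l2 (((k1 : ℝ) - l1) / 2) (((k2 : ℝ) - l2) / 2) := by
  have hL : BddBelow {r : ℝ | ∃ P : MvPolynomial (Fin 4) ℂ,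
      P.totalDegree ≤ k1 + l1 + k2 + l2 - 1 ∧ r = ballSupDev k1 l1 k2 l2 P} :=
    ⟨0, by rintro _ ⟨P, -, rfl⟩; exact ballSupDev_nonneg _ _ _ _ P⟩
  have hD : BddBelow {r : ℝ | ∃ Q : MvPolynomial (Fin 2) ℝ, IsDevDCandidate l1 l2 Q ∧
      r = triangleSup (((k1 : ℝ) - l1) / 2) (((k2 : ℝ) - l2) / 2) Q} :=
    ⟨0, by rintro _ ⟨Q, -, rfl⟩; exact triangleSup_nonneg _ _ Q⟩
  apply le_antisymm
  · refine le_csInf ⟨_, _, isDevDCandidate_monomial l1 l2, rfl⟩ ?_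
    rintro _ ⟨Q, hQ, rfl⟩
    obtain ⟨P, hPdeg, hPQ⟩ := exists_ballSupDev_eq_triangleSup h1 h2 hQ
    exact hPQ ▸ csInf_le hL ⟨P, hPdeg, rfl⟩
  · refine le_csInf ⟨_, 0, by simp, rfl⟩ ?_
    rintro _ ⟨P, hPdeg, rfl⟩
    obtain ⟨Q, hQ, hQP⟩ := exists_triangleSup_le_ballSupDev h1 h2 hn hPdeg
    exact (csInf_le hD ⟨Q, hQ, rfl⟩).trans hQP
end

section
/- Let α, β ≥ 0 be real numbers and l1, l2 nonnegative integers, and set m = l1+l2. If there exists a real polynomial Q in two variables whose coefficient of t1^{l1} t2^{l2} equals 1, all of whose other monomials have total degree at most m−1, and which satisfies sup_{(t1,t2) ∈ Δ} t1^α t2^β |Q(t1,t2)| ≤ E_m(α,β), then D_{l1,l2}(α,β) = E_m(α,β), and moreover sup_{(t1,t2) ∈ Δ} t1^α t2^β |Q(t1,t2)| = E_m(α,β), i.e. Q is a polynomial of least weighted deviation from zero on Δ. -/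
/-- The weighted sup norm `sup_{t ∈ [0,1]} t^α (1-t)^β |p(t)|` (real `rpow`, so `0^0 = 1`). -/
noncomputable def intervalSup (a b : ℝ) (p : Polynomial ℝ) : ℝ :=
  sSup ((fun t : ℝ => t ^ a * (1 - t) ^ b * |p.eval t|) '' Set.Icc (0 : ℝ) 1)

/-- The 1-D weighted Chebyshev constant `E_m(α,β)`: infimum over monic real polynomials of
degree `m` of `sup_{t ∈ [0,1]} t^α (1-t)^β |p(t)|`. -/
noncomputable def devE (m : ℕ) (a b : ℝ) : ℝ :=
  sInf {r : ℝ | ∃ p : Polynomial ℝ, p.Monic ∧ p.natDegree = m ∧ r = intervalSup a b p}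
open Polynomial

noncomputable def edgeP (Q : MvPolynomial (Fin 2) ℝ) : Polynomial ℝ :=
  MvPolynomial.aeval ![Polynomial.X, 1 - Polynomial.X] Q

lemma edgeP_eval (Q : MvPolynomial (Fin 2) ℝ) (t : ℝ) :
    (edgeP Q).eval t = MvPolynomial.eval ![t, 1 - t] Q := by
  induction Q using MvPolynomial.induction_on with
  | C c => simp [edgeP]
  | add p q hp hq => simp [edgeP, map_add] at hp hq ⊢; rw [hp, hq]
  | mul_X p i hp =>
      fin_cases i <;> simp [edgeP, map_mul, hp] at hp ⊢

lemma fsum_eq (d : Fin 2 →₀ ℕ) : (d.sum fun _ e => e) = d 0 + d 1 := by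
  rw [Finsupp.sum_fintype]
  · simp [Fin.sum_univ_two]
  · simp

lemma edgeP_expand (Q : MvPolynomial (Fin 2) ℝ) :
    edgeP Q = ∑ d ∈ Q.support,
      Polynomial.C (Q.coeff d) * (Polynomial.X ^ d 0 * (1 - Polynomial.X) ^ d 1) := by
  rw [edgeP, MvPolynomial.aeval_def, MvPolynomial.eval₂_eq']
  simp [Fin.prod_univ_two, Polynomial.algebraMap_eq]

lemma natDegree_one_sub_X : (1 - Polynomial.X : Polynomial ℝ).natDegree = 1 := by
  have : (1 - Polynomial.X : Polynomial ℝ) = -(Polynomial.X - Polynomial.C 1) := by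
    rw [Polynomial.C_1]; ring
  rw [this, natDegree_neg, natDegree_X_sub_C]

lemma term_natDegree_le (c : ℝ) (i j : ℕ) :
    (Polynomial.C c * (Polynomial.X ^ i * (1 - Polynomial.X) ^ j)).natDegree ≤ i + j := by
  apply (natDegree_mul_le).trans
  simp only [natDegree_C, zero_add]
  apply (natDegree_mul_le).trans
  have h1 : ((1 - Polynomial.X : Polynomial ℝ) ^ j).natDegree ≤ j := by
    apply (natDegree_pow_le).trans
    rw [natDegree_one_sub_X]; omega
  have h2 : ((Polynomial.X : Polynomial ℝ) ^ i).natDegree ≤ i := natDegree_pow_le.trans (by simp)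
  omega

lemma top_coeff (i j : ℕ) :
    (Polynomial.X ^ i * (1 - Polynomial.X) ^ j : Polynomial ℝ).coeff (i + j) = (-1) ^ j := by
  have h1 : (1 - Polynomial.X : Polynomial ℝ) = -(Polynomial.X - Polynomial.C 1) := by
    rw [Polynomial.C_1]; ring
  have hm : (Polynomial.X ^ i * (Polynomial.X - Polynomial.C 1) ^ j : Polynomial ℝ).Monic :=
    (monic_X_pow i).mul ((monic_X_sub_C (1:ℝ)).pow j)
  have hd : (Polynomial.X ^ i * (Polynomial.X - Polynomial.C 1) ^ j : Polynomial ℝ).natDegree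
      = i + j := by
    rw [(monic_X_pow i).natDegree_mul ((monic_X_sub_C (1:ℝ)).pow j), natDegree_X_pow,
      natDegree_pow, natDegree_X_sub_C, mul_one]
  have hcoef := hm.coeff_natDegree
  rw [hd] at hcoef
  have hre : (Polynomial.X ^ i * (-(Polynomial.X - Polynomial.C 1)) ^ j : Polynomial ℝ)
      = (Polynomial.X ^ i * (Polynomial.X - Polynomial.C 1) ^ j) * Polynomial.C ((-1:ℝ)^j) := by
    rw [neg_pow, map_pow, map_neg, map_one]; ring
  rw [h1, hre, Polynomial.coeff_mul_C, hcoef, one_mul]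

lemma dtop_apply (l1 l2 : ℕ) :
    (Finsupp.single (0 : Fin 2) l1 + Finsupp.single (1 : Fin 2) l2) 0 = l1 ∧
    (Finsupp.single (0 : Fin 2) l1 + Finsupp.single (1 : Fin 2) l2) 1 = l2 := by
  constructor <;> simp [Finsupp.single_apply]

lemma edgeP_coeff_natDegree {l1 l2 : ℕ} {Q : MvPolynomial (Fin 2) ℝ}
    (hQ : IsDevDCandidate l1 l2 Q) :
    (edgeP Q).coeff (l1 + l2) = (-1) ^ l2 ∧ (edgeP Q).natDegree = l1 + l2 := by
  set dtop := Finsupp.single (0 : Fin 2) l1 + Finsupp.single (1 : Fin 2) l2 with hdtop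
  have hd0 : dtop 0 = l1 := (dtop_apply l1 l2).1
  have hd1 : dtop 1 = l2 := (dtop_apply l1 l2).2
  have hmem : dtop ∈ Q.support := by
    rw [MvPolynomial.mem_support_iff, hQ.1]; exact one_ne_zero
  have hlt : ∀ d ∈ Q.support, d ≠ dtop → d 0 + d 1 < l1 + l2 := by
    intro d hd hne
    have h := hQ.2 d hd hne
    rw [fsum_eq] at h
    rcases Nat.eq_zero_or_pos (l1 + l2) with h0 | h0
    · exfalso
      apply hne
      have : d 0 = 0 ∧ d 1 = 0 := by omega
      ext i
      fin_cases i <;> simp [this.1, this.2] <;> omega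
    · omega
  have hcoeff : (edgeP Q).coeff (l1 + l2) = (-1) ^ l2 := by
    rw [edgeP_expand, Polynomial.finset_sum_coeff]
    rw [Finset.sum_eq_single_of_mem dtop hmem]
    · rw [hd0, hd1, Polynomial.coeff_C_mul, hQ.1, top_coeff, one_mul]
    · intro d hd hne
      apply Polynomial.coeff_eq_zero_of_natDegree_lt
      exact lt_of_le_of_lt (term_natDegree_le _ _ _) (hlt d hd hne)
  refine ⟨hcoeff, le_antisymm ?_ ?_⟩
  · rw [edgeP_expand]
    apply Polynomial.natDegree_sum_le_of_forall_le
    intro d hd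
    apply (term_natDegree_le _ _ _).trans
    rcases eq_or_ne d dtop with rfl | hne
    · omega
    · exact le_of_lt (hlt d hd hne)
  · apply Polynomial.le_natDegree_of_ne_zero
    rw [hcoeff]
    positivity

lemma isCompact_triangle : IsCompact triangle := by
  apply IsCompact.of_isClosed_subset (isCompact_Icc (a := ((0:ℝ),(0:ℝ))) (b := (1,1)))
  · have h1 : IsClosed {t : ℝ × ℝ | 0 ≤ t.1} := isClosed_le continuous_const continuous_fst
    have h2 : IsClosed {t : ℝ × ℝ | 0 ≤ t.2} := isClosed_le continuous_const continuous_snd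
    have h3 : IsClosed {t : ℝ × ℝ | t.1 + t.2 ≤ 1} :=
      isClosed_le (continuous_fst.add continuous_snd) continuous_const
    have : triangle = {t : ℝ × ℝ | 0 ≤ t.1} ∩ ({t : ℝ × ℝ | 0 ≤ t.2} ∩ {t | t.1 + t.2 ≤ 1}) := by
      ext t; simp [triangle, Set.mem_inter_iff, and_assoc]
    rw [this]; exact h1.inter (h2.inter h3)
  · rintro ⟨x, y⟩ ⟨hx, hy, hxy⟩
    constructor <;> constructor <;> simp_all <;> linarith

lemma continuous_evalQ (Q : MvPolynomial (Fin 2) ℝ) :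
    Continuous fun t : ℝ × ℝ => MvPolynomial.eval ![t.1, t.2] Q := by
  apply (MvPolynomial.continuous_eval Q).comp
  apply continuous_pi
  intro i
  fin_cases i
  · simpa using continuous_fst
  · simpa using continuous_snd

lemma bddAbove_triangle_image (a b : ℝ) (ha : 0 ≤ a) (hb : 0 ≤ b) (Q : MvPolynomial (Fin 2) ℝ) :
    BddAbove ((fun t : ℝ × ℝ => t.1 ^ a * t.2 ^ b * |MvPolynomial.eval ![t.1, t.2] Q|) ''
      triangle) := by
  obtain ⟨M, hM⟩ := (isCompact_triangle.image
    ((continuous_evalQ Q).abs)).bddAbove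
  refine ⟨max M 0, ?_⟩
  rintro _ ⟨⟨x, y⟩, ht, rfl⟩
  have hx := ht.1
  have hy := ht.2.1
  have hxy := ht.2.2
  have hMx : |MvPolynomial.eval ![x, y] Q| ≤ M := hM ⟨(x, y), ht, rfl⟩
  have h1 : x ^ a ≤ 1 := Real.rpow_le_one hx (by linarith) ha
  have h2 : y ^ b ≤ 1 := Real.rpow_le_one hy (by linarith) hb
  have h3 : (0:ℝ) ≤ x ^ a := Real.rpow_nonneg hx a
  have h4 : (0:ℝ) ≤ y ^ b := Real.rpow_nonneg hy b
  calc x ^ a * y ^ b * |MvPolynomial.eval ![x, y] Q|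
      ≤ 1 * 1 * max M 0 := by
        apply mul_le_mul (mul_le_mul h1 h2 h4 zero_le_one)
          (hMx.trans (le_max_left _ _)) (abs_nonneg _) (by norm_num)
    _ = max M 0 := by ring

lemma intervalSup_nonneg (a b : ℝ) (ha : 0 ≤ a) (hb : 0 ≤ b) (p : Polynomial ℝ) :
    0 ≤ intervalSup a b p := by
  apply Real.sSup_nonneg
  rintro _ ⟨t, ht, rfl⟩
  have h1 : (0:ℝ) ≤ t := ht.1
  have h2 : (0:ℝ) ≤ 1 - t := by linarith [ht.2]
  positivity

lemma intervalSup_le_triangleSup (a b : ℝ) (ha : 0 ≤ a) (hb : 0 ≤ b)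
    (Q : MvPolynomial (Fin 2) ℝ) :
    intervalSup a b (edgeP Q) ≤ triangleSup a b Q := by
  apply csSup_le_csSup (bddAbove_triangle_image a b ha hb Q)
  · exact ⟨_, ⟨0, by norm_num, rfl⟩⟩
  · rintro _ ⟨t, ht, rfl⟩
    refine ⟨(t, 1 - t), ⟨ht.1, by simp; linarith [ht.2], by simp⟩, ?_⟩
    simp [edgeP_eval]

lemma devE_le_intervalSup_edgeP (a b : ℝ) (ha : 0 ≤ a) (hb : 0 ≤ b) {l1 l2 : ℕ}
    {Q : MvPolynomial (Fin 2) ℝ} (hQ : IsDevDCandidate l1 l2 Q) :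
    devE (l1 + l2) a b ≤ intervalSup a b (edgeP Q) := by
  obtain ⟨hc, hdeg⟩ := edgeP_coeff_natDegree hQ
  set q : Polynomial ℝ := Polynomial.C ((-1:ℝ) ^ l2) * edgeP Q with hq
  have hne : ((-1:ℝ) ^ l2) ≠ 0 := by positivity
  have hqdeg : q.natDegree = l1 + l2 := by
    rw [hq, Polynomial.natDegree_C_mul hne, hdeg]
  have hqmonic : q.Monic := by
    unfold Polynomial.Monic
    rw [hq, Polynomial.leadingCoeff_mul, Polynomial.leadingCoeff_C]
    rw [Polynomial.leadingCoeff, hdeg, hc]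
    rw [← pow_add, ← two_mul]
    exact Even.neg_one_pow ⟨l2, by ring⟩
  have hsame : intervalSup a b q = intervalSup a b (edgeP Q) := by
    unfold intervalSup
    congr 1
    apply Set.image_congr
    intro t _
    rw [hq]
    simp [abs_mul, abs_pow]
  have hmem : intervalSup a b q ∈
      {r : ℝ | ∃ p : Polynomial ℝ, p.Monic ∧ p.natDegree = l1 + l2 ∧ r = intervalSup a b p} :=
    ⟨q, hqmonic, hqdeg, rfl⟩
  have hbdd : BddBelow
      {r : ℝ | ∃ p : Polynomial ℝ, p.Monic ∧ p.natDegree = l1 + l2 ∧ r = intervalSup a b p} := by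
    refine ⟨0, ?_⟩
    rintro r ⟨p, _, _, rfl⟩
    exact intervalSup_nonneg a b ha hb p
  calc devE (l1 + l2) a b ≤ intervalSup a b q := csInf_le hbdd hmem
    _ = intervalSup a b (edgeP Q) := hsame

lemma devE_le_triangleSup (a b : ℝ) (ha : 0 ≤ a) (hb : 0 ≤ b) {l1 l2 : ℕ}
    {Q : MvPolynomial (Fin 2) ℝ} (hQ : IsDevDCandidate l1 l2 Q) :
    devE (l1 + l2) a b ≤ triangleSup a b Q :=
  (devE_le_intervalSup_edgeP a b ha hb hQ).trans (intervalSup_le_triangleSup a b ha hb Q)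

/-- if some admissible `Q` (coefficient `1` on `t₁^{l₁} t₂^{l₂}`, other monomials
of total degree `≤ m-1`, `m = l₁+l₂`) has weighted deviation on `Δ` at most `E_m(α,β)`, then
`D_{l₁,l₂}(α,β) = E_m(α,β)` and `Q` attains the least weighted deviation `E_m(α,β)`. -/
theorem triangle_deviation_of_candidate (a b : ℝ) (ha : 0 ≤ a) (hb : 0 ≤ b) (l1 l2 : ℕ)
    (Q : MvPolynomial (Fin 2) ℝ) (hQ : IsDevDCandidate l1 l2 Q)
    (hle : triangleSup a b Q ≤ devE (l1 + l2) a b) :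
    devD l1 l2 a b = devE (l1 + l2) a b ∧ triangleSup a b Q = devE (l1 + l2) a b := by
  have hQeq : triangleSup a b Q = devE (l1 + l2) a b :=
    le_antisymm hle (devE_le_triangleSup a b ha hb hQ)
  refine ⟨?_, hQeq⟩
  set S := {r : ℝ | ∃ Q' : MvPolynomial (Fin 2) ℝ, IsDevDCandidate l1 l2 Q' ∧
    r = triangleSup a b Q'} with hS
  have hmem : triangleSup a b Q ∈ S := ⟨Q, hQ, rfl⟩
  have hlow : ∀ r ∈ S, devE (l1 + l2) a b ≤ r := by
    rintro r ⟨Q', hQ', rfl⟩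
    exact devE_le_triangleSup a b ha hb hQ'
  apply le_antisymm
  · calc devD l1 l2 a b ≤ triangleSup a b Q := csInf_le ⟨devE (l1 + l2) a b, hlow⟩ hmem
      _ ≤ devE (l1 + l2) a b := hle
  · exact le_csInf ⟨_, hmem⟩ hlow
end

section
/- Let α, β ≥ 0 be real numbers, n ≥ 0 an integer, and p a monic real polynomial of degree n. Set M = sup_{t ∈ [0,1]} t^α (1−t)^β |p(t)|. If there exist n+1 points 0 ≤ η_0 < η_1 < ... < η_n ≤ 1 such that η_k^α (1−η_k)^β p(η_k) = (−1)^{n−k} M for every k = 0, 1, ..., n, then p is a polynomial of least weighted deviation from zero, i.e. M = E_n(α,β): every monic real polynomial q of degree n satisfies sup_{t ∈ [0,1]} t^α (1−t)^β |q(t)| ≥ M. -/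
open Polynomial Set

lemma exists_mem_Ioo_eq_zero_of_mul_neg {f : ℝ → ℝ} {x y : ℝ} (hxy : x ≤ y)
    (hf : ContinuousOn f (Icc x y)) (h : f x * f y < 0) : ∃ z ∈ Ioo x y, f z = 0 := by
  rcases mul_neg_iff.1 h with ⟨hx, hy⟩ | ⟨hx, hy⟩
  · exact intermediate_value_Ioo' hxy hf ⟨hy, hx⟩
  · exact intermediate_value_Ioo hxy hf ⟨hx, hy⟩

lemma Polynomial.le_natDegree_of_mul_eval_neg {r : ℝ[X]} (hr : r ≠ 0) {n : ℕ}
    {x : Fin (n + 1) → ℝ} (hx : StrictMono x)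
    (h : ∀ k : Fin n, r.eval (x k.castSucc) * r.eval (x k.succ) < 0) : n ≤ r.natDegree := by
  have hroot (k : Fin n) : ∃ z ∈ Ioo (x k.castSucc) (x k.succ), r.eval z = 0 :=
    exists_mem_Ioo_eq_zero_of_mul_neg (hx Fin.castSucc_lt_succ).le r.continuous.continuousOn (h k)
  choose z hz hz0 using hroot
  have hz_mono : StrictMono z := fun k l hkl =>
    calc z k < x k.succ := (hz k).2
      _ ≤ x l.castSucc := hx.monotone (Fin.succ_le_castSucc_iff.2 hkl)
      _ < z l := (hz l).1
  calc n = (Finset.univ.image z).card := by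
        rw [Finset.card_image_of_injective _ hz_mono.injective, Finset.card_fin]
    _ ≤ r.natDegree := card_le_degree_of_subset_roots fun y hy => by
        obtain ⟨k, -, rfl⟩ := Finset.mem_image.1 (Finset.mem_def.2 hy)
        exact (mem_roots hr).2 (hz0 k)

lemma continuous_weighted_abs_eval {a b : ℝ} (ha : 0 ≤ a) (hb : 0 ≤ b) (p : ℝ[X]) :
    Continuous fun t : ℝ => t ^ a * (1 - t) ^ b * |p.eval t| := by
  have := Real.continuous_rpow_const ha
  have := Real.continuous_rpow_const hb
  fun_prop

lemma weighted_abs_eval_le_intervalSup {a b : ℝ} (ha : 0 ≤ a) (hb : 0 ≤ b) (p : ℝ[X]) {t : ℝ}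
    (ht : t ∈ Icc (0 : ℝ) 1) : t ^ a * (1 - t) ^ b * |p.eval t| ≤ intervalSup a b p :=
  le_csSup ((isCompact_Icc.image (continuous_weighted_abs_eval ha hb p)).bddAbove)
    (mem_image_of_mem _ ht)

lemma pos_mul_sub_of_mul_eq_of_mul_abs_lt {w u v c M : ℝ} (hw : 0 ≤ w) (hc : |c| = 1)
    (hu : w * u = c * M) (hv : w * |v| < M) : 0 < c * (u - v) := by
  have hcu : c * (w * u) = M := by rw [hu, ← mul_assoc, ← abs_mul_abs_self, hc, one_mul, one_mul]
  have hcv : c * (w * v) < M := by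
    calc c * (w * v) ≤ |c * (w * v)| := le_abs_self _
      _ = w * |v| := by rw [abs_mul, abs_mul, hc, abs_of_nonneg hw, one_mul]
      _ < M := hv
  have hpos : 0 < w * (c * (u - v)) := by
    rw [show w * (c * (u - v)) = c * (w * u) - c * (w * v) by ring]
    linarith
  exact pos_of_mul_pos_right hpos hw

lemma neg_one_pow_sub_mul_neg_one_pow_sub_succ {n k : ℕ} (hk : k < n) :
    (-1 : ℝ) ^ (n - k) * (-1) ^ (n - (k + 1)) = -1 := by
  rw [show n - k = n - (k + 1) + 1 by omega, pow_succ, mul_comm, ← mul_assoc, ← pow_add,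
    ← two_mul, pow_mul]
  norm_num

lemma intervalSup_le_of_equioscillation {a b : ℝ} (ha : 0 ≤ a) (hb : 0 ≤ b) {n : ℕ} {p q : ℝ[X]}
    (hp : p.Monic) (hdeg : p.natDegree = n) (hq : q.Monic) (hqdeg : q.natDegree = n)
    {η : Fin (n + 1) → ℝ} (hmono : StrictMono η) (hmem : ∀ k, η k ∈ Icc (0 : ℝ) 1)
    (halt : ∀ k : Fin (n + 1),
      η k ^ a * (1 - η k) ^ b * p.eval (η k) = (-1 : ℝ) ^ (n - (k : ℕ)) * intervalSup a b p) :
    intervalSup a b p ≤ intervalSup a b q := by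
  by_contra! hlt
  set r := p - q
  have hsign (k : Fin (n + 1)) : 0 < (-1 : ℝ) ^ (n - (k : ℕ)) * r.eval (η k) := by
    rw [eval_sub]
    exact pos_mul_sub_of_mul_eq_of_mul_abs_lt
      (mul_nonneg (Real.rpow_nonneg (hmem k).1 a) (Real.rpow_nonneg (sub_nonneg.2 (hmem k).2) b))
      (by simp) (halt k) ((weighted_abs_eval_le_intervalSup ha hb q (hmem k)).trans_lt hlt)
  have hr : r ≠ 0 := fun h => by simpa [h] using hsign 0
  have hchange (k : Fin n) : r.eval (η k.castSucc) * r.eval (η k.succ) < 0 := by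
    have h := mul_pos (hsign k.castSucc) (hsign k.succ)
    have hc := neg_one_pow_sub_mul_neg_one_pow_sub_succ k.isLt
    simp only [Fin.val_castSucc, Fin.val_succ] at h
    nlinarith
  have hdeg_lt : r.natDegree < n := hdeg ▸ natDegree_lt_natDegree hr (degree_sub_lt_left
    (by rw [degree_eq_natDegree hp.ne_zero, degree_eq_natDegree hq.ne_zero, hdeg, hqdeg])
    hp.ne_zero (by rw [hp.leadingCoeff, hq.leadingCoeff]))
  exact hdeg_lt.not_ge (le_natDegree_of_mul_eval_neg hr hmono hchange)

/-- a monic polynomial of degree `n` whose weighted extremal function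
equioscillates between `±M` (where `M` is its weighted sup norm) at `n+1` points of `[0,1]` is a
polynomial of least weighted deviation: `M = E_n(α,β)` and every monic `q` of degree `n` has
weighted sup norm at least `M`. -/
theorem equioscillation_implies_extremal (a b : ℝ) (ha : 0 ≤ a) (hb : 0 ≤ b) (n : ℕ)
    (p : Polynomial ℝ) (hp : p.Monic) (hdeg : p.natDegree = n)
    (η : Fin (n + 1) → ℝ) (hmono : StrictMono η) (hmem : ∀ k, η k ∈ Set.Icc (0 : ℝ) 1)
    (halt : ∀ k : Fin (n + 1),
      η k ^ a * (1 - η k) ^ b * p.eval (η k) = (-1 : ℝ) ^ (n - (k : ℕ)) * intervalSup a b p) :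
    intervalSup a b p = devE n a b ∧
    ∀ q : Polynomial ℝ, q.Monic → q.natDegree = n →
      intervalSup a b p ≤ intervalSup a b q := by
  have hmin (q : ℝ[X]) (hq : q.Monic) (hqdeg : q.natDegree = n) :
      intervalSup a b p ≤ intervalSup a b q :=
    intervalSup_le_of_equioscillation ha hb hp hdeg hq hqdeg hmono hmem halt
  refine ⟨Eq.symm <| IsLeast.csInf_eq ⟨⟨p, hp, hdeg, rfl⟩, ?_⟩, hmin⟩
  rintro _ ⟨q, hq, hqdeg, rfl⟩
  exact hmin q hq hqdeg
end

section
/- Let η ∈ (0,1) and let f1, f2 : [0,1] → ℝ be functions such that: f1 is monotone increasing on [η, 1] with f1(η) = 1; f2 is monotone increasing on [1−η, 1] with f2(1−η) = 1; and |f1(t) · f2(1−t)| ≤ 1 for all t ∈ [0,1]. Then |f1(t1) · f2(t2)| ≤ 1 for all (t1,t2) with t1 ≥ 0, t2 ≥ 0 and t1 + t2 ≤ 1. -/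
/-- if `f₁` is monotone increasing on `[η,1]` with `f₁(η) = 1`, `f₂` is monotone
increasing on `[1-η,1]` with `f₂(1-η) = 1`, and `|f₁(t) f₂(1-t)| ≤ 1` on `[0,1]`, then
`|f₁(t₁) f₂(t₂)| ≤ 1` on the triangle `t₁ ≥ 0, t₂ ≥ 0, t₁ + t₂ ≤ 1`. -/
theorem product_bound_on_triangle (η : ℝ) (hη : η ∈ Set.Ioo (0 : ℝ) 1) (f1 f2 : ℝ → ℝ)
    (h1 : MonotoneOn f1 (Set.Icc η 1)) (h1η : f1 η = 1)
    (h2 : MonotoneOn f2 (Set.Icc (1 - η) 1)) (h2η : f2 (1 - η) = 1)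
    (hdiag : ∀ t ∈ Set.Icc (0 : ℝ) 1, |f1 t * f2 (1 - t)| ≤ 1) :
    ∀ t1 t2 : ℝ, 0 ≤ t1 → 0 ≤ t2 → t1 + t2 ≤ 1 → |f1 t1 * f2 t2| ≤ 1 := by
  obtain ⟨hη0, hη1⟩ := hη
  intro t1 t2 ht1 ht2 hsum
  have ht1' : t1 ≤ 1 := by linarith
  have ht2' : t2 ≤ 1 := by linarith
  by_cases hc2 : 1 - η ≤ t2
  · have hmem : (1 - t1) ∈ Set.Icc (1-η) 1 := ⟨by linarith, by linarith⟩
    have hmem2 : t2 ∈ Set.Icc (1-η) 1 := ⟨hc2, ht2'⟩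
    have h21 : 1 ≤ f2 t2 := h2η ▸ h2 ⟨le_refl _, by linarith⟩ hmem2 hc2
    have hle : f2 t2 ≤ f2 (1 - t1) := h2 hmem2 hmem (by linarith)
    have hd := hdiag t1 ⟨ht1, ht1'⟩
    calc |f1 t1 * f2 t2| = |f1 t1| * |f2 t2| := abs_mul _ _
      _ ≤ |f1 t1| * |f2 (1 - t1)| := by
          apply mul_le_mul_of_nonneg_left _ (abs_nonneg _)
          rw [abs_of_nonneg (by linarith), abs_of_nonneg (by linarith)]
          exact hle
      _ = |f1 t1 * f2 (1 - t1)| := (abs_mul _ _).symm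
      _ ≤ 1 := hd
  · push_neg at hc2
    by_cases hc1 : η ≤ t1
    · have hmem : (1 - t2) ∈ Set.Icc η 1 := ⟨by linarith, by linarith⟩
      have hmem1 : t1 ∈ Set.Icc η 1 := ⟨hc1, ht1'⟩
      have h11 : 1 ≤ f1 t1 := h1η ▸ h1 ⟨le_refl _, by linarith⟩ hmem1 hc1
      have hle : f1 t1 ≤ f1 (1 - t2) := h1 hmem1 hmem (by linarith)
      have hd := hdiag (1 - t2) ⟨by linarith, by linarith⟩
      rw [show (1 - (1 - t2)) = t2 by ring] at hd
      calc |f1 t1 * f2 t2| = |f1 t1| * |f2 t2| := abs_mul _ _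
        _ ≤ |f1 (1 - t2)| * |f2 t2| := by
            apply mul_le_mul_of_nonneg_right _ (abs_nonneg _)
            rw [abs_of_nonneg (by linarith), abs_of_nonneg (by linarith)]
            exact hle
        _ = |f1 (1 - t2) * f2 t2| := (abs_mul _ _).symm
        _ ≤ 1 := hd
    · push_neg at hc1
      have hA : 1 ≤ f2 (1 - t1) :=
        h2η ▸ h2 ⟨le_refl _, by linarith⟩ ⟨by linarith, by linarith⟩ (by linarith)
      have hB : 1 ≤ f1 (1 - t2) :=
        h1η ▸ h1 ⟨le_refl _, by linarith⟩ ⟨by linarith, by linarith⟩ (by linarith)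
      have hd1 := hdiag t1 ⟨ht1, ht1'⟩
      have hd2 := hdiag (1 - t2) ⟨by linarith, by linarith⟩
      rw [show (1 - (1 - t2)) = t2 by ring] at hd2
      rw [abs_mul] at hd1 hd2 ⊢
      have hf1 : |f1 t1| ≤ 1 := by
        nlinarith [abs_nonneg (f1 t1), abs_nonneg (f2 (1 - t1)), le_abs_self (f2 (1 - t1))]
      have hf2 : |f2 t2| ≤ 1 := by
        nlinarith [abs_nonneg (f2 t2), abs_nonneg (f1 (1 - t2)), le_abs_self (f1 (1 - t2))]
      nlinarith [abs_nonneg (f1 t1), abs_nonneg (f2 t2)]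
end

section
/- Let α, β ≥ 0 be real numbers, l1, l2 nonnegative integers with m = l1+l2 ≥ 1, and let ξ_1 < ξ_2 < ... < ξ_m be points of (0,1) such that the monic polynomial p(t) = (t−ξ_1)⋯(t−ξ_m) satisfies sup_{t ∈ [0,1]} t^α (1−t)^β |p(t)| = E_m(α,β), and such that there exist m+1 points 0 ≤ η_0 < η_1 < ... < η_m ≤ 1 with η_k^α (1−η_k)^β p(η_k) = (−1)^{m−k} E_m(α,β) for all k. Then sup_{(t1,t2) ∈ Δ} t1^α t2^β · |(t1−ξ_1)⋯(t1−ξ_{l1})| · |(1−t2−ξ_{l1+1})⋯(1−t2−ξ_m)| = E_m(α,β). -/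
open Finset

noncomputable def leftFactor {ι : Type*} (a : ℝ) (ξ : ι → ℝ) (S : Finset ι) (u : ℝ) : ℝ :=
  u ^ a * |∏ i ∈ S, (u - ξ i)|

noncomputable def rightFactor {ι : Type*} (b : ℝ) (ξ : ι → ℝ) (T : Finset ι) (v : ℝ) : ℝ :=
  (1 - v) ^ b * |∏ i ∈ T, (v - ξ i)|

section Factors

variable {ι : Type*} {ξ : ι → ℝ} {S T : Finset ι} {a b c : ℝ}

theorem leftFactor_nonneg {u : ℝ} (hu : 0 ≤ u) : 0 ≤ leftFactor a ξ S u :=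
  mul_nonneg (Real.rpow_nonneg hu a) (abs_nonneg _)

theorem rightFactor_nonneg {v : ℝ} (hv : v ≤ 1) : 0 ≤ rightFactor b ξ T v :=
  mul_nonneg (Real.rpow_nonneg (sub_nonneg.2 hv) b) (abs_nonneg _)

theorem leftFactor_monotoneOn (ha : 0 ≤ a) (hc : 0 ≤ c) (hξ : ∀ i ∈ S, ξ i ≤ c) :
    MonotoneOn (leftFactor a ξ S) (Set.Ici c) := by
  have hfac : ∀ u ∈ Set.Ici c, ∀ i ∈ S, 0 ≤ u - ξ i := fun u hu i hi =>
    sub_nonneg.2 ((hξ i hi).trans hu)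
  intro u hu v hv huv
  simp only [leftFactor, abs_of_nonneg (prod_nonneg (hfac u hu)),
    abs_of_nonneg (prod_nonneg (hfac v hv))]
  exact mul_le_mul (Real.rpow_le_rpow (hc.trans hu) huv ha)
    (prod_le_prod (hfac u hu) fun i _ => by linarith) (prod_nonneg (hfac u hu))
    (Real.rpow_nonneg (hc.trans hv) a)

theorem rightFactor_antitoneOn (hb : 0 ≤ b) (hc : c ≤ 1) (hξ : ∀ i ∈ T, c ≤ ξ i) :
    AntitoneOn (rightFactor b ξ T) (Set.Iic c) := by
  have hfac : ∀ v ∈ Set.Iic c, ∀ i ∈ T, 0 ≤ ξ i - v := fun v hv i hi =>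
    sub_nonneg.2 (le_trans hv (hξ i hi))
  have habs : ∀ v ∈ Set.Iic c, |∏ i ∈ T, (v - ξ i)| = ∏ i ∈ T, (ξ i - v) := fun v hv => by
    rw [abs_prod]
    exact prod_congr rfl fun i hi => by rw [abs_sub_comm, abs_of_nonneg (hfac v hv i hi)]
  intro u hu v hv huv
  simp only [rightFactor, habs u hu, habs v hv]
  exact mul_le_mul (Real.rpow_le_rpow (by linarith [Set.mem_Iic.1 hv]) (by linarith) hb)
    (prod_le_prod (hfac v hv) fun i _ => by linarith) (prod_nonneg (hfac v hv))
    (Real.rpow_nonneg (by linarith [Set.mem_Iic.1 hu]) b)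

end Factors

theorem mul_le_of_monotoneOn_of_antitoneOn {α : Type*} [LinearOrder α] {f g : α → ℝ} {s u v : α}
    (hf : MonotoneOn f (Set.Ici s)) (hg : AntitoneOn g (Set.Iic s)) (huv : u ≤ v)
    (hfu : 0 ≤ f u) (hgv : 0 ≤ g v) (hfs : 0 < f s) (hgs : 0 < g s)
    (hu : f u * g u ≤ f s * g s) (hv : f v * g v ≤ f s * g s) :
    f u * g v ≤ f s * g s := by
  rcases le_or_gt s u with hsu | hus
  · exact (mul_le_mul_of_nonneg_right (hf hsu (hsu.trans huv) huv) hgv).trans hv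
  rcases le_or_gt v s with hvs | hsv
  · exact (mul_le_mul_of_nonneg_left (hg hus.le hvs huv) hfu).trans hu
  have hfus : f u ≤ f s := le_of_mul_le_mul_right
    ((mul_le_mul_of_nonneg_left (hg hus.le le_rfl hus.le) hfu).trans hu) hgs
  have hgvs : g v ≤ g s := le_of_mul_le_mul_left
    ((mul_le_mul_of_nonneg_right (hf le_rfl hsv.le hsv.le) hgv).trans hv) hfs
  exact mul_le_mul hfus hgvs hgv hfs.le

theorem leftFactor_mul_rightFactor_le {ι : Type*} {ξ : ι → ℝ} {S T : Finset ι}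
    {a b E s u v : ℝ} (ha : 0 ≤ a) (hb : 0 ≤ b) (hs : s ∈ Set.Icc (0 : ℝ) 1)
    (hS : ∀ i ∈ S, ξ i ≤ s) (hT : ∀ i ∈ T, s ≤ ξ i)
    (hsE : leftFactor a ξ S s * rightFactor b ξ T s = E) (hE : 0 < E)
    (hmax : ∀ t ∈ Set.Icc (0 : ℝ) 1, leftFactor a ξ S t * rightFactor b ξ T t ≤ E)
    (hu : 0 ≤ u) (huv : u ≤ v) (hv : v ≤ 1) :
    leftFactor a ξ S u * rightFactor b ξ T v ≤ E := by
  have hFs : 0 < leftFactor a ξ S s := (leftFactor_nonneg hs.1).lt_of_ne (by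
    rintro h; rw [← h, zero_mul] at hsE; exact hE.ne hsE)
  have hGs : 0 < rightFactor b ξ T s := (rightFactor_nonneg hs.2).lt_of_ne (by
    rintro h; rw [← h, mul_zero] at hsE; exact hE.ne hsE)
  subst hsE
  exact mul_le_of_monotoneOn_of_antitoneOn (leftFactor_monotoneOn ha hs.1 hS)
    (rightFactor_antitoneOn hb hs.2 hT) huv (leftFactor_nonneg hu) (rightFactor_nonneg hv) hFs hGs
    (hmax u ⟨hu, huv.trans hv⟩) (hmax v ⟨hu.trans huv, hv⟩)

theorem exists_mem_Ioo_of_prod_sub_mul_neg {ι : Type*} (S : Finset ι) (ξ : ι → ℝ) {x y : ℝ}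
    (hxy : x ≤ y) (h : (∏ i ∈ S, (x - ξ i)) * ∏ i ∈ S, (y - ξ i) < 0) :
    ∃ i ∈ S, ξ i ∈ Set.Ioo x y := by
  have hcont : ContinuousOn (fun t => ∏ i ∈ S, (t - ξ i)) (Set.Icc x y) := by fun_prop
  obtain ⟨t, ht, hzero⟩ : ∃ t ∈ Set.Ioo x y, ∏ i ∈ S, (t - ξ i) = 0 := by
    rcases mul_neg_iff.1 h with ⟨hx, hy⟩ | ⟨hx, hy⟩
    · exact intermediate_value_Ioo' hxy hcont ⟨hy, hx⟩
    · exact intermediate_value_Ioo hxy hcont ⟨hx, hy⟩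
  obtain ⟨i, hi, hti⟩ := prod_eq_zero_iff.1 hzero
  exact ⟨i, hi, sub_eq_zero.1 hti ▸ ht⟩

theorem mul_neg_of_alternating {w₀ w₁ x₀ x₁ E : ℝ} (n : ℕ) (hw₀ : 0 ≤ w₀) (hw₁ : 0 ≤ w₁)
    (hE : E ≠ 0) (h₀ : w₀ * x₀ = (-1) ^ (n + 1) * E) (h₁ : w₁ * x₁ = (-1) ^ n * E) :
    x₀ * x₁ < 0 := by
  have hsign : (-1 : ℝ) ^ (n + 1) * (-1) ^ n = -1 := by
    rw [← pow_add]
    exact Odd.neg_one_pow ⟨n, by ring⟩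
  have hprod : (w₀ * w₁) * (x₀ * x₁) = -E ^ 2 := by
    linear_combination (w₁ * x₁) * h₀ + ((-1) ^ (n + 1) * E) * h₁ + E ^ 2 * hsign
  by_contra! hnonneg
  have := mul_nonneg (mul_nonneg hw₀ hw₁) hnonneg
  linarith [sq_pos_of_ne_zero hE]

theorem interlace_of_forall_exists_between {m : ℕ} {ξ : Fin m → ℝ} (hξ : StrictMono ξ)
    {η : Fin (m + 1) → ℝ} (hη : StrictMono η)
    (h : ∀ k : Fin m, ∃ i, η k.castSucc < ξ i ∧ ξ i < η k.succ) (k : Fin m) :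
    η k.castSucc < ξ k ∧ ξ k < η k.succ := by
  -- `σ k` is a root in the `k`-th gap; the gaps are ordered, so `σ` is a strictly monotone
  -- self-map of `Fin m`, hence the identity.
  choose σ hσ using h
  have hσ_mono : StrictMono σ := fun k k' hkk' => hξ.lt_iff_lt.1 <|
    calc ξ (σ k) < η k.succ := (hσ k).2
      _ ≤ η k'.castSucc := hη.monotone (Fin.succ_le_castSucc_iff.2 hkk')
      _ < ξ (σ k') := (hσ k').1
  simpa only [hσ_mono.apply_eq] using hσ k

theorem interlace_of_alternating {m : ℕ} {w : ℝ → ℝ} {ξ : ℕ → ℝ} {η : Fin (m + 1) → ℝ} {E : ℝ}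
    (hξ : ∀ i, i + 1 < m → ξ i < ξ (i + 1)) (hη : StrictMono η) (hw : ∀ k, 0 ≤ w (η k))
    (hE : E ≠ 0)
    (halt : ∀ k : Fin (m + 1), w (η k) * ∏ i ∈ range m, (η k - ξ i) = (-1) ^ (m - (k : ℕ)) * E)
    (k : Fin m) : η k.castSucc < ξ k ∧ ξ k < η k.succ := by
  have hξ' : StrictMono fun i : Fin m => ξ i := fun i j hij =>
    strictMonoOn_Iic_of_lt_succ (n := m - 1) (fun i hi => hξ i (by omega))
      (show (i : ℕ) ≤ m - 1 by omega) (show (j : ℕ) ≤ m - 1 by omega) hij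
  refine interlace_of_forall_exists_between hξ' hη (fun k => ?_) k
  have h₀ : w (η k.castSucc) * ∏ i ∈ range m, (η k.castSucc - ξ i) =
      (-1) ^ (m - (k + 1) + 1) * E := by
    rw [halt, Fin.val_castSucc, show m - k = m - (k + 1) + 1 by omega]
  have h₁ : w (η k.succ) * ∏ i ∈ range m, (η k.succ - ξ i) = (-1) ^ (m - (k + 1)) * E := by
    rw [halt, Fin.val_succ]
  have hsign := mul_neg_of_alternating _ (hw _) (hw _) hE h₀ h₁
  rw [← Fin.prod_univ_eq_prod_range, ← Fin.prod_univ_eq_prod_range] at hsign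
  obtain ⟨i, -, hi⟩ := exists_mem_Ioo_of_prod_sub_mul_neg univ (fun i : Fin m => ξ i)
    (hη.monotone (Fin.castSucc_lt_succ (i := k)).le) hsign
  exact ⟨i, hi⟩

theorem weight_mul_abs_prod_range_eq {a b t : ℝ} {l m : ℕ} (hl : l ≤ m) (ξ : ℕ → ℝ) :
    t ^ a * (1 - t) ^ b * |∏ i ∈ range m, (t - ξ i)| =
      leftFactor a ξ (range l) t * rightFactor b ξ (Ico l m) t := by
  rw [leftFactor, rightFactor, ← prod_range_mul_prod_Ico _ hl, abs_mul]
  ring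

theorem exists_split_point_of_alternating {a b E : ℝ} {l m : ℕ} (hl : l ≤ m) {ξ : ℕ → ℝ}
    (hξ : ∀ i, i + 1 < m → ξ i < ξ (i + 1)) {η : Fin (m + 1) → ℝ} (hη : StrictMono η)
    (hηmem : ∀ k, η k ∈ Set.Icc (0 : ℝ) 1) (hE : 0 < E)
    (halt : ∀ k : Fin (m + 1),
      η k ^ a * (1 - η k) ^ b * ∏ i ∈ range m, (η k - ξ i) = (-1) ^ (m - (k : ℕ)) * E) :
    ∃ s ∈ Set.Icc (0 : ℝ) 1, (∀ i ∈ range l, ξ i ≤ s) ∧ (∀ i ∈ Ico l m, s ≤ ξ i) ∧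
      leftFactor a ξ (range l) s * rightFactor b ξ (Ico l m) s = E := by
  have hw : ∀ k, 0 ≤ η k ^ a * (1 - η k) ^ b := fun k =>
    mul_nonneg (Real.rpow_nonneg (hηmem k).1 a) (Real.rpow_nonneg (sub_nonneg.2 (hηmem k).2) b)
  have hint := interlace_of_alternating (w := fun t => t ^ a * (1 - t) ^ b) hξ hη hw hE.ne' halt
  refine ⟨η ⟨l, by omega⟩, hηmem _, fun i hi => ?_, fun i hi => ?_, ?_⟩
  · have hi := mem_range.1 hi
    exact (hint ⟨i, by omega⟩).2.le.trans
      (hη.monotone (Fin.le_iff_val_le_val.2 (by simp only [Fin.val_succ]; omega)))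
  · have hi := mem_Ico.1 hi
    exact (hη.monotone (Fin.le_iff_val_le_val.2 (by simp only [Fin.val_castSucc]; omega))).trans
      (hint ⟨i, hi.2⟩).1.le
  · rw [← weight_mul_abs_prod_range_eq hl, ← abs_of_nonneg (hw _), ← abs_mul, halt]
    simp [abs_of_pos hE]

theorem isLUB_intervalSup {a b : ℝ} (ha : 0 ≤ a) (hb : 0 ≤ b) (p : Polynomial ℝ) :
    IsLUB ((fun t : ℝ => t ^ a * (1 - t) ^ b * |p.eval t|) '' Set.Icc 0 1) (intervalSup a b p) := by
  have hcont : Continuous fun t : ℝ => t ^ a * (1 - t) ^ b * |p.eval t| :=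
    ((continuous_id.rpow_const fun _ => Or.inr ha).mul
      ((continuous_const.sub continuous_id).rpow_const fun _ => Or.inr hb)).mul p.continuous.abs
  exact isLUB_csSup ((Set.nonempty_Icc.2 zero_le_one).image _)
    (isCompact_Icc.bddAbove_image hcont.continuousOn)

theorem intervalSup_pos {a b : ℝ} (ha : 0 ≤ a) (hb : 0 ≤ b) {p : Polynomial ℝ} (hp : p ≠ 0) :
    0 < intervalSup a b p := by
  obtain ⟨t, ht, hroot⟩ := (Set.Ioo_infinite (zero_lt_one' ℝ)).exists_notMem_finset p.roots.toFinset
  have hpt : p.eval t ≠ 0 := by simpa [Polynomial.mem_roots hp] using hroot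
  have hWt : 0 < t ^ a * (1 - t) ^ b * |p.eval t| :=
    mul_pos (mul_pos (Real.rpow_pos_of_pos ht.1 a) (Real.rpow_pos_of_pos (sub_pos.2 ht.2) b))
      (abs_pos.2 hpt)
  exact hWt.trans_le ((isLUB_intervalSup ha hb p).1 ⟨t, Set.Ioo_subset_Icc_self ht, rfl⟩)

theorem sSup_image_triangle_eq {f g : ℝ → ℝ} {E : ℝ}
    (hE : IsLUB ((fun t => f t * g t) '' Set.Icc 0 1) E)
    (hfg : ∀ u v, 0 ≤ u → u ≤ v → v ≤ 1 → f u * g v ≤ E) :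
    sSup ((fun t : ℝ × ℝ => f t.1 * g (1 - t.2)) '' triangle) = E := by
  refine IsLUB.csSup_eq ⟨?_, fun x hx => hE.2 ?_⟩
    ⟨_, Set.mem_image_of_mem _ (⟨le_rfl, le_rfl, by norm_num⟩ : ((0 : ℝ), (0 : ℝ)) ∈ triangle)⟩
  · rintro _ ⟨t, ⟨h₁, h₂, h₃⟩, rfl⟩
    exact hfg _ _ h₁ (by linarith) (by linarith)
  · rintro _ ⟨t, ht, rfl⟩
    exact hx ⟨(t, 1 - t), ⟨ht.1, by linarith [ht.2], by linarith⟩, by simp⟩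

theorem split_product_sup_eq_general (a b : ℝ) (ha : 0 ≤ a) (hb : 0 ≤ b) (l1 l2 : ℕ)
    (ξ : ℕ → ℝ)
    (hξmono : ∀ i, i + 1 < l1 + l2 → ξ i < ξ (i + 1))
    (hext : intervalSup a b (∏ i ∈ Finset.range (l1 + l2),
        (Polynomial.X - Polynomial.C (ξ i))) = devE (l1 + l2) a b)
    (η : Fin (l1 + l2 + 1) → ℝ) (hηmono : StrictMono η)
    (hηmem : ∀ k, η k ∈ Set.Icc (0 : ℝ) 1)
    (halt : ∀ k : Fin (l1 + l2 + 1),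
      η k ^ a * (1 - η k) ^ b *
          Polynomial.eval (η k)
            (∏ i ∈ Finset.range (l1 + l2), (Polynomial.X - Polynomial.C (ξ i))) =
        (-1 : ℝ) ^ (l1 + l2 - (k : ℕ)) * devE (l1 + l2) a b) :
    sSup ((fun t : ℝ × ℝ => t.1 ^ a * t.2 ^ b *
        |∏ i ∈ Finset.range l1, (t.1 - ξ i)| *
        |∏ i ∈ Finset.Ico l1 (l1 + l2), (1 - t.2 - ξ i)|) '' triangle) =
      devE (l1 + l2) a b := by
  have hl : l1 ≤ l1 + l2 := Nat.le_add_right l1 l2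
  have heval : ∀ t : ℝ, Polynomial.eval t (∏ i ∈ range (l1 + l2),
      (Polynomial.X - Polynomial.C (ξ i))) = ∏ i ∈ range (l1 + l2), (t - ξ i) := fun t => by
    simp [Polynomial.eval_prod]
  have hLUB : IsLUB ((fun t => leftFactor a ξ (range l1) t * rightFactor b ξ (Ico l1 (l1 + l2)) t)
      '' Set.Icc 0 1) (devE (l1 + l2) a b) := by
    have h := isLUB_intervalSup ha hb (∏ i ∈ range (l1 + l2), (Polynomial.X - Polynomial.C (ξ i)))
    simpa only [heval, weight_mul_abs_prod_range_eq hl, hext] using h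
  have hE : 0 < devE (l1 + l2) a b :=
    hext ▸ intervalSup_pos ha hb (Polynomial.monic_prod_X_sub_C ξ _).ne_zero
  simp only [heval] at halt
  obtain ⟨s, hs, hS, hT, hsE⟩ := exists_split_point_of_alternating hl hξmono hηmono hηmem hE halt
  have hsplit : (fun t : ℝ × ℝ => t.1 ^ a * t.2 ^ b * |∏ i ∈ range l1, (t.1 - ξ i)| *
      |∏ i ∈ Ico l1 (l1 + l2), (1 - t.2 - ξ i)|) =
      fun t => leftFactor a ξ (range l1) t.1 * rightFactor b ξ (Ico l1 (l1 + l2)) (1 - t.2) := by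
    ext t
    simp only [leftFactor, rightFactor, sub_sub_cancel]
    ring
  rw [hsplit]
  exact sSup_image_triangle_eq hLUB fun u v hu huv hv =>
    leftFactor_mul_rightFactor_le ha hb hs hS hT hsE hE (fun t ht => hLUB.1 ⟨t, ht, rfl⟩) hu huv hv

/-- if the monic extremal polynomial `p(t) = (t-ξ₁)⋯(t-ξ_m)` for `E_m(α,β)`
(`m = l₁+l₂ ≥ 1`) has increasing roots in `(0,1)` and equioscillates at `m+1` points, then the
split product satisfies
`sup_{Δ} t₁^α t₂^β |(t₁-ξ₁)⋯(t₁-ξ_{l₁})| |(1-t₂-ξ_{l₁+1})⋯(1-t₂-ξ_m)| = E_m(α,β)`. -/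
theorem split_product_sup_eq (a b : ℝ) (ha : 0 ≤ a) (hb : 0 ≤ b) (l1 l2 : ℕ)
    (hm : 1 ≤ l1 + l2) (ξ : ℕ → ℝ)
    (hξmono : ∀ i, i + 1 < l1 + l2 → ξ i < ξ (i + 1))
    (hξmem : ∀ i < l1 + l2, ξ i ∈ Set.Ioo (0 : ℝ) 1)
    (hext : intervalSup a b (∏ i ∈ Finset.range (l1 + l2),
        (Polynomial.X - Polynomial.C (ξ i))) = devE (l1 + l2) a b)
    (η : Fin (l1 + l2 + 1) → ℝ) (hηmono : StrictMono η)
    (hηmem : ∀ k, η k ∈ Set.Icc (0 : ℝ) 1)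
    (halt : ∀ k : Fin (l1 + l2 + 1),
      η k ^ a * (1 - η k) ^ b *
          Polynomial.eval (η k)
            (∏ i ∈ Finset.range (l1 + l2), (Polynomial.X - Polynomial.C (ξ i))) =
        (-1 : ℝ) ^ (l1 + l2 - (k : ℕ)) * devE (l1 + l2) a b) :
    sSup ((fun t : ℝ × ℝ => t.1 ^ a * t.2 ^ b *
        |∏ i ∈ Finset.range l1, (t.1 - ξ i)| *
        |∏ i ∈ Finset.Ico l1 (l1 + l2), (1 - t.2 - ξ i)|) '' triangle) =
      devE (l1 + l2) a b :=
  split_product_sup_eq_general a b ha hb l1 l2 ξ hξmono hext η hηmono hηmem halt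
end

section
/- Let 0 < x1 < x2 < 1 be real numbers and set α = √(x1·x2) and β = √((1−x1)·(1−x2)). Then α + β < 1, and the following identity holds: √(x1 x2) · ln((√x2 − √x1)^2 / (x2 − x1)) + √((1−x1)(1−x2)) · ln((√(1−x1) − √(1−x2))^2 / (x2 − x1)) + ln(4/(x2 − x1)) = ((1−α−β)/2) · ln(16 / ((1−(α+β)^2)(1−(α−β)^2))) + α · ln(4 / ((1+α)^2 − β^2)) + β · ln(4 / ((1+β)^2 − α^2)). -/
/-- for `0 < x₁ < x₂ < 1`, with `α = √(x₁x₂)` and `β = √((1-x₁)(1-x₂))`, one has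
`α + β < 1` and the identity
`√(x₁x₂) ln((√x₂-√x₁)²/(x₂-x₁)) + √((1-x₁)(1-x₂)) ln((√(1-x₁)-√(1-x₂))²/(x₂-x₁))
+ ln(4/(x₂-x₁)) = ((1-α-β)/2) ln(16/((1-(α+β)²)(1-(α-β)²))) + α ln(4/((1+α)²-β²))
+ β ln(4/((1+β)²-α²))`. -/
theorem capacity_identity (x1 x2 : ℝ) (h1 : 0 < x1) (h12 : x1 < x2) (h2 : x2 < 1)
    (α β : ℝ) (hα : α = Real.sqrt (x1 * x2)) (hβ : β = Real.sqrt ((1 - x1) * (1 - x2))) :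
    α + β < 1 ∧
    Real.sqrt (x1 * x2) * Real.log ((Real.sqrt x2 - Real.sqrt x1) ^ 2 / (x2 - x1)) +
        Real.sqrt ((1 - x1) * (1 - x2)) *
          Real.log ((Real.sqrt (1 - x1) - Real.sqrt (1 - x2)) ^ 2 / (x2 - x1)) +
        Real.log (4 / (x2 - x1)) =
      (1 - α - β) / 2 *
          Real.log (16 / ((1 - (α + β) ^ 2) * (1 - (α - β) ^ 2))) +
        α * Real.log (4 / ((1 + α) ^ 2 - β ^ 2)) +
        β * Real.log (4 / ((1 + β) ^ 2 - α ^ 2)) := by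
  have hx2 : 0 < x2 := h1.trans h12
  have h1x1 : 0 < 1 - x1 := by linarith
  have h1x2 : 0 < 1 - x2 := by linarith
  set a := Real.sqrt x1 with ha'
  set b := Real.sqrt x2 with hb'
  set c := Real.sqrt (1 - x1) with hc'
  set d := Real.sqrt (1 - x2) with hd'
  have ha0 : 0 < a := Real.sqrt_pos.mpr h1
  have hb0 : 0 < b := Real.sqrt_pos.mpr hx2
  have hc0 : 0 < c := Real.sqrt_pos.mpr h1x1
  have hd0 : 0 < d := Real.sqrt_pos.mpr h1x2
  have ha2 : a ^ 2 = x1 := Real.sq_sqrt h1.le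
  have hb2 : b ^ 2 = x2 := Real.sq_sqrt hx2.le
  have hc2 : c ^ 2 = 1 - x1 := Real.sq_sqrt h1x1.le
  have hd2 : d ^ 2 = 1 - x2 := Real.sq_sqrt h1x2.le
  have hab : a < b := Real.sqrt_lt_sqrt h1.le h12
  have hdc : d < c := Real.sqrt_lt_sqrt h1x2.le (by linarith)
  have hba : 0 < b - a := sub_pos.mpr hab
  have hcd : 0 < c - d := sub_pos.mpr hdc
  have hbapos : 0 < b + a := by linarith
  have hcdpos : 0 < c + d := by linarith
  have hαab : α = a * b := by rw [hα, Real.sqrt_mul h1.le]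
  have hβcd : β = c * d := by rw [hβ, Real.sqrt_mul h1x1.le]
  have hab2 : (a * b) ^ 2 = x1 * x2 := by rw [mul_pow, ha2, hb2]
  have hcd2 : (c * d) ^ 2 = (1 - x1) * (1 - x2) := by rw [mul_pow, hc2, hd2]
  have hbc2 : (b * c) ^ 2 = x2 * (1 - x1) := by rw [mul_pow, hb2, hc2]
  have had2 : (a * d) ^ 2 = x1 * (1 - x2) := by rw [mul_pow, ha2, hd2]
  have hdiff1 : x2 - x1 = (b - a) * (b + a) := by linear_combination ha2 - hb2
  have hdiff2 : x2 - x1 = (c - d) * (c + d) := by linear_combination hd2 - hc2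
  -- part 1
  have hadbc : a * d < b * c := by nlinarith
  have f1 : 1 - (a * b + c * d) ^ 2 = (b * c - a * d) ^ 2 := by
    linear_combination - hab2 - hcd2 - hbc2 - had2
  have f2 : 1 - (a * b - c * d) ^ 2 = (b * c + a * d) ^ 2 := by
    linear_combination - hab2 - hcd2 - hbc2 - had2
  have hs1 : 0 < 1 + (α + β) := by
    rw [hαab, hβcd]; positivity
  have hlt : α + β < 1 := by
    have hz : 0 < (b * c - a * d) ^ 2 := pow_pos (by linarith) 2
    have hk : (1 - (α + β)) * (1 + (α + β)) = (b * c - a * d) ^ 2 := by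
      rw [hαab, hβcd]; linear_combination f1
    by_contra hle
    push_neg at hle
    have h0 : 1 - (α + β) ≤ 0 := by linarith
    have h1' : (1 - (α + β)) * (1 + (α + β)) ≤ 0 :=
      mul_nonpos_of_nonpos_of_nonneg h0 hs1.le
    linarith [hk ▸ h1', hz]
  refine ⟨hlt, ?_⟩
  -- key product identities
  have f3 : (b * c) ^ 2 - (a * d) ^ 2 = x2 - x1 := by linear_combination hbc2 - had2
  have eprod : (1 - (a * b + c * d) ^ 2) * (1 - (a * b - c * d) ^ 2) = (x2 - x1) ^ 2 := by
    rw [f1, f2]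
    linear_combination ((b * c) ^ 2 - (a * d) ^ 2 + (x2 - x1)) * f3
  have q5 : (1 + a * b) ^ 2 - (c * d) ^ 2 = (a + b) ^ 2 := by
    linear_combination hab2 - hcd2 - ha2 - hb2
  have q6 : (1 + c * d) ^ 2 - (a * b) ^ 2 = (c + d) ^ 2 := by
    linear_combination hcd2 - hab2 - hc2 - hd2
  -- log lemmas
  have hS : Real.log (b - a) + Real.log (b + a) = Real.log (c - d) + Real.log (c + d) := by
    rw [← Real.log_mul hba.ne' hbapos.ne', ← Real.log_mul hcd.ne' hcdpos.ne',
      ← hdiff1, ← hdiff2]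
  have hlog16 : Real.log 16 = 2 * Real.log 4 := by
    rw [show (16 : ℝ) = 4 * 4 by norm_num, Real.log_mul (by norm_num) (by norm_num)]; ring
  have e1 : Real.log ((b - a) ^ 2 / (x2 - x1)) = Real.log (b - a) - Real.log (b + a) := by
    rw [hdiff1, show (b - a) ^ 2 / ((b - a) * (b + a)) = (b - a) / (b + a) by
      rw [sq]; exact mul_div_mul_left _ _ hba.ne']
    exact Real.log_div hba.ne' hbapos.ne'
  have e2 : Real.log ((c - d) ^ 2 / (x2 - x1)) = Real.log (c - d) - Real.log (c + d) := by
    rw [hdiff2, show (c - d) ^ 2 / ((c - d) * (c + d)) = (c - d) / (c + d) by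
      rw [sq]; exact mul_div_mul_left _ _ hcd.ne']
    exact Real.log_div hcd.ne' hcdpos.ne'
  have e3 : Real.log (4 / (x2 - x1)) = Real.log 4 - (Real.log (b - a) + Real.log (b + a)) := by
    rw [hdiff1, Real.log_div (by norm_num) (by positivity), Real.log_mul hba.ne' hbapos.ne']
  have hsq : (x2 - x1) ^ 2 = ((b - a) * (b + a)) * ((c - d) * (c + d)) := by
    linear_combination (x2 - x1) * hdiff1 + ((b - a) * (b + a)) * hdiff2
  have e4 : Real.log (16 / ((1 - (a * b + c * d) ^ 2) * (1 - (a * b - c * d) ^ 2))) =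
      Real.log 16 - (Real.log (b - a) + Real.log (b + a) + Real.log (c - d) + Real.log (c + d)) := by
    rw [eprod, hsq, Real.log_div (by norm_num) (by positivity),
      Real.log_mul (by positivity) (by positivity), Real.log_mul hba.ne' hbapos.ne',
      Real.log_mul hcd.ne' hcdpos.ne']
    ring
  have e5 : Real.log (4 / ((1 + a * b) ^ 2 - (c * d) ^ 2)) =
      Real.log 4 - 2 * Real.log (a + b) := by
    rw [q5, Real.log_div (by norm_num) (by positivity), Real.log_pow]
    norm_num
  have e6 : Real.log (4 / ((1 + c * d) ^ 2 - (a * b) ^ 2)) =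
      Real.log 4 - 2 * Real.log (c + d) := by
    rw [q6, Real.log_div (by norm_num) (by positivity), Real.log_pow]
    norm_num
  have hc1 : Real.log (a + b) = Real.log (b + a) := by rw [add_comm]
  have hc2' : Real.log (c + d) = Real.log (d + c) := by rw [add_comm]
  rw [← hα, ← hβ, hαab, hβcd, e1, e2, e3, e4, e5, e6]
  linear_combination ((a * b - c * d - 1) / 2) * hS + ((a * b + c * d - 1) / 2) * hlog16 + (2 * (a * b)) * hc1
end
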